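/- Let G be an odd-order nontrivial connected graph. The strong product G ⊠ P_3 is equimatchable if and only if G is a complete graph. -/

import Mathlib

open SimpleGraph

variable {V : Type*} {W : Type*}

/-- The strong product of two simple graphs. -/
def strongProd (G : SimpleGraph V) (H : SimpleGraph W) : SimpleGraph (V × W) where
  Adj x y := x ≠ y ∧ (x.1 = y.1 ∨ G.Adj x.1 y.1) ∧ (x.2 = y.2 ∨ H.Adj x.2 y.2)
  symm := ⟨fun x y ⟨hne, h1, h2⟩ =>
    ⟨hne.symm, h1.imp Eq.symm (fun h => h.symm), h2.imp Eq.symm (fun h => h.symm)⟩⟩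
  loopless := ⟨fun x h => h.1 rfl⟩

/-- A dominating set: every vertex outside has a neighbor inside. -/
def IsDomSet (G : SimpleGraph V) (D : Set V) : Prop :=
  ∀ v, v ∉ D → ∃ u ∈ D, G.Adj u v

/-- A minimal dominating set. -/
def IsMinlDomSet (G : SimpleGraph V) (D : Set V) : Prop :=
  IsDomSet G D ∧ ∀ D', D' ⊂ D → ¬ IsDomSet G D'

/-- A graph is well-dominated if every minimal dominating set has minimum cardinality. -/
def WellDominated (G : SimpleGraph V) : Prop :=
  ∀ D D' : Set V, IsMinlDomSet G D → IsDomSet G D' → D.ncard ≤ D'.ncard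

/-- The domination number. -/
noncomputable def domNum (G : SimpleGraph V) : ℕ :=
  sInf {n | ∃ D : Set V, IsDomSet G D ∧ D.ncard = n}

/-- The closed neighborhood of a vertex. -/
def closedNbhd (G : SimpleGraph V) (v : V) : Set V := insert v (G.neighborSet v)

/-- `G` is trivially well-dominated via the vertices `u 0, …, u (t-1)`:
their closed neighborhoods are cliques and partition `V`. -/
def TriviallyWellDominatedWith (G : SimpleGraph V) {t : ℕ} (u : Fin t → V) : Prop :=
  (∀ i, G.IsClique (closedNbhd G (u i))) ∧ (∀ v : V, ∃! i, v ∈ closedNbhd G (u i))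

def TriviallyWellDominated (G : SimpleGraph V) : Prop :=
  ∃ (t : ℕ) (u : Fin t → V), TriviallyWellDominatedWith G u

/-- An edge dominating set: every edge of `G` not in `F` shares an endpoint
with some edge of `F`. -/
def IsEDS (G : SimpleGraph V) (F : Set (Sym2 V)) : Prop :=
  F ⊆ G.edgeSet ∧ ∀ e ∈ G.edgeSet, e ∉ F → ∃ f ∈ F, ∃ v, v ∈ e ∧ v ∈ f

/-- A minimal edge dominating set. -/
def IsMinlEDS (G : SimpleGraph V) (F : Set (Sym2 V)) : Prop :=
  IsEDS G F ∧ ∀ F', F' ⊂ F → ¬ IsEDS G F'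

/-- Well-edge-dominated: every minimal edge dominating set has minimum cardinality. -/
def WellEdgeDominated (G : SimpleGraph V) : Prop :=
  ∀ F F' : Set (Sym2 V), IsMinlEDS G F → IsEDS G F' → F.ncard ≤ F'.ncard

/-- A matching, as a set of pairwise nonadjacent edges. -/
def IsMatchingSet (G : SimpleGraph V) (M : Set (Sym2 V)) : Prop :=
  M ⊆ G.edgeSet ∧ ∀ e ∈ M, ∀ f ∈ M, e ≠ f → ∀ v : V, ¬ (v ∈ e ∧ v ∈ f)

/-- A maximal matching. -/
def IsMaxlMatching (G : SimpleGraph V) (M : Set (Sym2 V)) : Prop :=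
  IsMatchingSet G M ∧ ∀ M', M ⊆ M' → IsMatchingSet G M' → M' = M

/-- A maximum matching. -/
def IsMaxMatching (G : SimpleGraph V) (M : Set (Sym2 V)) : Prop :=
  IsMatchingSet G M ∧ ∀ M', IsMatchingSet G M' → M'.ncard ≤ M.ncard

/-- Equimatchable: every maximal matching is maximum. -/
def Equimatchable (G : SimpleGraph V) : Prop :=
  ∀ M M' : Set (Sym2 V), IsMaxlMatching G M → IsMatchingSet G M' → M'.ncard ≤ M.ncard

/-- The set of endpoints of the edges of `M`. -/
def mVerts (M : Set (Sym2 V)) : Set V := {v | ∃ e ∈ M, v ∈ e}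

/-- A perfect matching covers every vertex. -/
def IsPerfectMatchingSet (G : SimpleGraph V) (M : Set (Sym2 V)) : Prop :=
  IsMatchingSet G M ∧ ∀ v : V, v ∈ mVerts M

/-- A near-perfect matching covers all vertices but exactly one. -/
def IsNearPerfectMatchingSet (G : SimpleGraph V) (M : Set (Sym2 V)) : Prop :=
  IsMatchingSet G M ∧ ∃ w : V, mVerts M = {w}ᶜ

/-- The matching number. -/
noncomputable def matchNum (G : SimpleGraph V) : ℕ :=
  sSup {n | ∃ M : Set (Sym2 V), IsMatchingSet G M ∧ M.ncard = n}

/-- The independence number. -/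
noncomputable def indepNum (G : SimpleGraph V) : ℕ :=
  sSup {n | ∃ S : Set V, (S.Pairwise fun u v => ¬ G.Adj u v) ∧ S.ncard = n}

/-- `G` with a set of vertices deleted (induced subgraph on the complement). -/
abbrev delVerts (G : SimpleGraph V) (S : Set V) : SimpleGraph ↥(Sᶜ) := G.induce Sᶜ

/-- Factor-critical: deleting any vertex leaves a graph with a perfect matching. -/
def FactorCritical (G : SimpleGraph V) : Prop :=
  ∀ v : V, ∃ M, IsPerfectMatchingSet (delVerts G {v}) M

/-- 2-connected: at least three vertices, connected, and no cutvertex. -/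
def TwoConnected (G : SimpleGraph V) [Fintype V] : Prop :=
  3 ≤ Fintype.card V ∧ G.Connected ∧ ∀ v : V, (delVerts G {v}).Connected

/-!
Copying a matching `K` of `G` into the three layers and covering each exposed vertex by a vertical
edge gives a matching of `G ⊠ P₃` with `|V| + |K|` edges; choosing the vertical edge to be `01` over
an independent set `I` and `12` elsewhere, it is maximal as soon as the remaining exposed vertices
of `G` are independent. Equimatchability therefore yields a maximum matching `K` of `G` with
`α(G) + 2|K| ≤ |V|`. Then every covered vertex has an exposed neighbour, and since there are no
augmenting paths of length 3 or 5, this neighbour is unique and is shared by adjacent covered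
vertices; in a connected graph at most one vertex is exposed, so `α(G) ≤ 1`.

Conversely, an independent set of `Kₙ ⊠ P₃` has at most two vertices, so a maximal matching misses
at most two of the `3n` vertices, hence exactly one when `n` is odd.
-/

open Function

variable {G : SimpleGraph V} {M K : Set (Sym2 V)} {e : Sym2 V} {u u' v w x y z p q : V}

@[simp]
lemma mem_mVerts : v ∈ mVerts M ↔ ∃ e ∈ M, v ∈ e := Iff.rfl

lemma mem_mVerts_insert : v ∈ mVerts (insert e M) ↔ v ∈ e ∨ v ∈ mVerts M := by
  simp

lemma mVerts_mono (h : M ⊆ K) : mVerts M ⊆ mVerts K :=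
  fun _ ⟨e, he, hv⟩ => ⟨e, h he, hv⟩

lemma notMem_of_notMem_mVerts (hx : x ∉ mVerts M) : s(x, y) ∉ M :=
  fun h => hx ⟨_, h, Sym2.mem_mk_left x y⟩

lemma exists_mk_mem_of_mem_mVerts (hx : x ∈ mVerts M) : ∃ y, s(x, y) ∈ M := by
  obtain ⟨e, he, hxe⟩ := hx
  obtain ⟨y, rfl⟩ := Sym2.mem_iff_exists.1 hxe
  exact ⟨y, he⟩

namespace IsMatchingSet

lemma mono (hK : IsMatchingSet G K) (h : M ⊆ K) : IsMatchingSet G M :=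
  ⟨h.trans hK.1, fun e he f hf => hK.2 e (h he) f (h hf)⟩

lemma eq_of_mem (hM : IsMatchingSet G M) {f : Sym2 V} (he : e ∈ M) (hf : f ∈ M)
    (hve : v ∈ e) (hvf : v ∈ f) : e = f := by
  by_contra hne
  exact hM.2 e he f hf hne v ⟨hve, hvf⟩

lemma adj (hM : IsMatchingSet G M) (h : s(x, y) ∈ M) : G.Adj x y := hM.1 h

lemma insert (hM : IsMatchingSet G M) (hxy : G.Adj x y) (hx : x ∉ mVerts M)
    (hy : y ∉ mVerts M) : IsMatchingSet G (insert s(x, y) M) := by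
  refine ⟨Set.insert_subset hxy hM.1, ?_⟩
  have hfree : ∀ f ∈ M, ∀ v ∈ s(x, y), v ∉ f := by
    rintro f hf v hv hvf
    rcases Sym2.mem_iff.1 hv with rfl | rfl
    exacts [hx ⟨f, hf, hvf⟩, hy ⟨f, hf, hvf⟩]
  rintro e (rfl | he) f (rfl | hf) hne v ⟨hve, hvf⟩
  · exact hne rfl
  · exact hfree f hf v hve hvf
  · exact hfree e he v hvf hve
  · exact hM.2 e he f hf hne v ⟨hve, hvf⟩

lemma ncard_mVerts [Finite V] (hM : IsMatchingSet G M) : (mVerts M).ncard = 2 * M.ncard := by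
  classical
  obtain ⟨F, rfl⟩ := (Set.toFinite M).exists_finset_coe
  have hV : mVerts (F : Set (Sym2 V)) = ↑(F.biUnion Sym2.toFinset) := by
    ext v
    simp [Sym2.mem_toFinset]
  rw [hV, Set.ncard_coe_finset, Set.ncard_coe_finset, Finset.card_biUnion, mul_comm,
    Finset.sum_const_nat fun e he => Sym2.card_toFinset_of_not_isDiag e
      (G.not_isDiag_of_mem_edgeSet (hM.1 he))]
  intro e he f hf hne
  exact Finset.disjoint_left.2 fun v hve hvf =>
    hM.2 e he f hf hne v ⟨Sym2.mem_toFinset.1 hve, Sym2.mem_toFinset.1 hvf⟩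

end IsMatchingSet

lemma isMaxlMatching_iff_isIndepSet (hM : IsMatchingSet G M) :
    IsMaxlMatching G M ↔ G.IsIndepSet (mVerts M)ᶜ := by
  constructor
  · intro h x hx y hy hne hxy
    have := h.2 _ (Set.subset_insert _ _) (hM.insert hxy hx hy)
    exact hx ⟨s(x, y), this ▸ Set.mem_insert _ _, Sym2.mem_mk_left x y⟩
  · refine fun hind => ⟨hM, fun M' hsub hM' => (Set.Subset.antisymm ?_ hsub)⟩
    intro e he'
    by_contra he
    induction e using Sym2.ind with | _ x y => ?_
    have hfree : ∀ v ∈ s(x, y), v ∉ mVerts M := fun v hv ⟨f, hf, hvf⟩ =>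
      hM'.2 _ he' f (hsub hf) (fun h => he (h ▸ hf)) v ⟨hv, hvf⟩
    exact hind (hfree x (Sym2.mem_mk_left x y)) (hfree y (Sym2.mem_mk_right x y))
      (hM'.adj he').ne (hM'.adj he')

lemma IsMaxlMatching.isIndepSet (h : IsMaxlMatching G M) : G.IsIndepSet (mVerts M)ᶜ :=
  (isMaxlMatching_iff_isIndepSet h.1).1 h

def involutionEdges (σ : V → V) : Set (Sym2 V) := (fun x => s(x, σ x)) '' {x | σ x ≠ x}

section Involution

variable {σ : V → V}

lemma eq_of_mem_involutionEdges (hσ : Involutive σ) (he : e ∈ involutionEdges σ) (hv : v ∈ e) :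
    e = s(v, σ v) := by
  obtain ⟨x, -, rfl⟩ := he
  rcases Sym2.mem_iff.1 hv with rfl | rfl
  · rfl
  · rw [hσ x, Sym2.eq_swap]

lemma mVerts_involutionEdges (hσ : Involutive σ) : mVerts (involutionEdges σ) = {x | σ x ≠ x} := by
  ext v
  refine ⟨fun ⟨e, he, hv⟩ => ?_, fun hv => ⟨_, ⟨v, hv, rfl⟩, Sym2.mem_mk_left _ _⟩⟩
  obtain ⟨x, hx, rfl⟩ := he
  rcases Sym2.mem_iff.1 hv with rfl | rfl
  · exact hx
  · show σ (σ x) ≠ σ x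
    rw [hσ x]
    exact Ne.symm hx

lemma isMatchingSet_involutionEdges (hσ : Involutive σ) (hadj : ∀ x, σ x ≠ x → G.Adj x (σ x)) :
    IsMatchingSet G (involutionEdges σ) := by
  refine ⟨?_, fun e he f hf hne v ⟨hve, hvf⟩ => hne ?_⟩
  · rintro _ ⟨x, hx, rfl⟩
    exact hadj x hx
  · rw [eq_of_mem_involutionEdges hσ he hve, eq_of_mem_involutionEdges hσ hf hvf]

lemma IsMatchingSet.exists_involutive (hM : IsMatchingSet G M) :
    ∃ σ : V → V, Involutive σ ∧ involutionEdges σ = M := by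
  classical
  let σ x := if h : ∃ y, s(x, y) ∈ M then h.choose else x
  have hσ : ∀ x y, s(x, y) ∈ M → σ x = y := fun x y h => by
    have hex : ∃ y, s(x, y) ∈ M := ⟨y, h⟩
    simp only [σ, dif_pos hex]
    exact Sym2.congr_right.1 (hM.eq_of_mem hex.choose_spec h (Sym2.mem_mk_left _ _)
      (Sym2.mem_mk_left _ _))
  have hfix : ∀ x, (¬∃ y, s(x, y) ∈ M) → σ x = x := fun x h => dif_neg h
  refine ⟨σ, fun x => ?_, ?_⟩
  · by_cases h : ∃ y, s(x, y) ∈ M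
    · obtain ⟨y, hy⟩ := h
      rw [hσ x y hy, hσ y x (Sym2.eq_swap ▸ hy)]
    · rw [hfix x h, hfix x h]
  · ext e
    constructor
    · rintro ⟨x, hx, rfl⟩
      by_cases h : ∃ y, s(x, y) ∈ M
      · obtain ⟨y, hy⟩ := h
        show s(x, σ x) ∈ M
        rwa [hσ x y hy]
      · exact absurd (hfix x h) hx
    · intro he
      induction e using Sym2.ind with | _ x y => ?_
      refine ⟨x, ?_, ?_⟩
      · simpa [hσ x y he] using (hM.adj he).ne.symm
      · simp [hσ x y he]

end Involution

lemma SimpleGraph.Adj.adj_swap [DecidableEq V] {a b : V} (hab : G.Adj a b)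
    (hv : Equiv.swap a b v ≠ v) : G.Adj v (Equiv.swap a b v) := by
  by_cases hva : v = a
  · subst hva
    simpa using hab
  by_cases hvb : v = b
  · subst hvb
    simpa using hab.symm
  exact absurd (Equiv.swap_apply_of_ne_of_ne hva hvb) hv

section StrongProd

open Classical

variable {σ : V → V} {I : Set V}

noncomputable def liftInvolution (σ : V → V) (I : Set V) (p : V × Fin 3) : V × Fin 3 :=
  if σ p.1 = p.1 then (p.1, (if p.1 ∈ I then Equiv.swap 0 1 else Equiv.swap 1 2) p.2)
  else (σ p.1, p.2)

lemma liftInvolution_involutive (hσ : Involutive σ) : Involutive (liftInvolution σ I) := by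
  rintro ⟨v, j⟩
  by_cases hv : σ v = v
  · by_cases hvI : v ∈ I <;> simp [liftInvolution, hv, hvI]
  · simp [liftInvolution, hv, hσ v, Ne.symm hv]

lemma liftInvolution_eq_self_iff {p : V × Fin 3} :
    liftInvolution σ I p = p ↔ σ p.1 = p.1 ∧ p.2 = if p.1 ∈ I then 2 else 0 := by
  obtain ⟨v, j⟩ := p
  have h01 : Equiv.swap (0 : Fin 3) 1 j = j ↔ j = 2 := by revert j; decide
  have h12 : Equiv.swap (1 : Fin 3) 2 j = j ↔ j = 0 := by revert j; decide
  by_cases hv : σ v = v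
  · by_cases hvI : v ∈ I <;> simp [liftInvolution, hv, hvI, h01, h12]
  · simp [liftInvolution, hv]

lemma strongProd_adj_liftInvolution (hadj : ∀ x, σ x ≠ x → G.Adj x (σ x)) (p : V × Fin 3)
    (hp : liftInvolution σ I p ≠ p) :
    (strongProd G (pathGraph 3)).Adj p (liftInvolution σ I p) := by
  obtain ⟨v, j⟩ := p
  by_cases hv : σ v = v
  · have hP : ∀ {a b : Fin 3}, (pathGraph 3).Adj a b → Equiv.swap a b j ≠ j →
        (strongProd G (pathGraph 3)).Adj (v, j) (v, Equiv.swap a b j) := fun hab hj =>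
      ⟨by simpa using hj.symm, Or.inl rfl, Or.inr (hab.adj_swap hj)⟩
    have hj : ∀ τ : Equiv.Perm (Fin 3), (v, τ j) ≠ (v, j) → τ j ≠ j := fun τ h h' => h (by rw [h'])
    by_cases hvI : v ∈ I <;> simp only [liftInvolution, hv, hvI, if_true, if_false] at hp ⊢ <;>
      exact hP (by simp [pathGraph_adj]) (hj _ hp)
  · simp only [liftInvolution, hv, if_false] at hp ⊢
    exact ⟨fun h => hv (congrArg Prod.fst h).symm, Or.inr (hadj v hv), Or.inl rfl⟩

lemma ncard_fixedPoints_liftInvolution [Finite V] :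
    {p | liftInvolution σ I p = p}.ncard = {v | σ v = v}.ncard := by
  classical
  have : {p | liftInvolution σ I p = p} =
      (fun v => (v, if v ∈ I then 2 else 0)) '' {v | σ v = v} := by
    ext ⟨v, j⟩
    simp only [Set.mem_ofPred_eq, liftInvolution_eq_self_iff, Set.mem_image, Prod.mk.injEq]
    constructor
    · rintro ⟨hv, hj⟩
      exact ⟨v, hv, rfl, hj.symm⟩
    · rintro ⟨w, hw, rfl, rfl⟩
      exact ⟨hw, rfl⟩
  rw [this, Set.ncard_image_of_injective _ fun a b h => congrArg Prod.fst h]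

lemma isIndepSet_fixedPoints_liftInvolution (hI : G.IsIndepSet I)
    (hU : G.IsIndepSet ({v | σ v = v} \ I)) :
    (strongProd G (pathGraph 3)).IsIndepSet {p | liftInvolution σ I p = p} := by
  rintro ⟨v, j⟩ hp ⟨w, k⟩ hq hne ⟨-, hvw, hjk⟩
  simp only [Set.mem_ofPred_eq, liftInvolution_eq_self_iff] at hp hq
  obtain ⟨hv, hj⟩ := hp
  obtain ⟨hw, hk⟩ := hq
  simp only [hj, hk] at hne hjk
  have hlayer : (v ∈ I ↔ w ∈ I) := by
    by_cases hvI : v ∈ I <;> by_cases hwI : w ∈ I <;> simp [hvI, hwI, pathGraph_adj] at hjk ⊢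
  have hvw' : G.Adj v w := hvw.resolve_left fun h => hne (by subst h; rfl)
  by_cases hvI : v ∈ I
  · exact hI hvI (hlayer.1 hvI) hvw'.ne hvw'
  · exact hU ⟨hv, hvI⟩ ⟨hw, fun h => hvI (hlayer.2 h)⟩ hvw'.ne hvw'

theorem IsMatchingSet.exists_strongProd_pathGraph_three [Finite V] (hK : IsMatchingSet G K)
    (I : Set V) :
    ∃ M, IsMatchingSet (strongProd G (pathGraph 3)) M ∧ M.ncard = Nat.card V + K.ncard ∧
      (G.IsIndepSet I → G.IsIndepSet ((mVerts K)ᶜ \ I) →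
        IsMaxlMatching (strongProd G (pathGraph 3)) M) := by
  obtain ⟨σ, hσ, rfl⟩ := hK.exists_involutive
  have hσ' : Involutive (liftInvolution σ I) := liftInvolution_involutive hσ
  have hM := isMatchingSet_involutionEdges hσ'
    (strongProd_adj_liftInvolution fun x hx => hK.adj ⟨x, hx, rfl⟩)
  have hfix : (mVerts (involutionEdges (liftInvolution σ I)))ᶜ =
      {p | liftInvolution σ I p = p} := by
    ext; simp [mVerts_involutionEdges hσ']
  have hfixK : (mVerts (involutionEdges σ))ᶜ = {v | σ v = v} := by
    ext; simp [mVerts_involutionEdges hσ]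
  refine ⟨_, hM, ?_, fun hI hU => (isMaxlMatching_iff_isIndepSet hM).2 ?_⟩
  · have h1 := Set.ncard_add_ncard_compl (mVerts (involutionEdges (liftInvolution σ I)))
    have h2 := Set.ncard_add_ncard_compl (mVerts (involutionEdges σ))
    rw [hfix, ncard_fixedPoints_liftInvolution, hM.ncard_mVerts, Nat.card_prod,
      Nat.card_eq_fintype_card (α := Fin 3), Fintype.card_fin] at h1
    rw [hfixK, hK.ncard_mVerts] at h2
    omega
  · rw [hfix]
    exact isIndepSet_fixedPoints_liftInvolution hI (hfixK ▸ hU)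

end StrongProd

lemma exists_isMatchingSet_disjoint_isIndepSet [Finite V] (G : SimpleGraph V) (I : Set V) :
    ∃ K, IsMatchingSet G K ∧ Disjoint (mVerts K) I ∧ G.IsIndepSet ((mVerts K)ᶜ \ I) := by
  obtain ⟨K, ⟨hK, hKI⟩, hmax⟩ := Set.exists_max_image
    {K : Set (Sym2 V) | IsMatchingSet G K ∧ Disjoint (mVerts K) I} Set.ncard (Set.toFinite _)
    ⟨∅, ⟨Set.empty_subset _, by simp⟩, by simp [Set.disjoint_left]⟩
  refine ⟨K, hK, hKI, fun x ⟨hx, hxI⟩ y ⟨hy, hyI⟩ _ hxy => ?_⟩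
  have hK' : insert s(x, y) K ∈ {K : Set (Sym2 V) | IsMatchingSet G K ∧ Disjoint (mVerts K) I} :=
    ⟨hK.insert hxy hx hy, Set.disjoint_left.2 fun v hv hvI => by
      rcases mem_mVerts_insert.1 hv with hv | hv
      · rcases Sym2.mem_iff.1 hv with rfl | rfl
        exacts [hxI hvI, hyI hvI]
      · exact Set.disjoint_left.1 hKI hv hvI⟩
  have := hmax _ hK'
  rw [Set.ncard_insert_of_notMem (notMem_of_notMem_mVerts hx)] at this
  omega

theorem Equimatchable.exists_isMaxMatching_of_strongProd_pathGraph_three [Finite V]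
    (h : Equimatchable (strongProd G (pathGraph 3))) :
    ∃ K, IsMaxMatching G K ∧ ∀ I, G.IsIndepSet I → I.ncard + 2 * K.ncard ≤ Nat.card V := by
  obtain ⟨K, hK, -, hKind⟩ := exists_isMatchingSet_disjoint_isIndepSet G ∅
  obtain ⟨M, hM, hMcard, hMmax⟩ := hK.exists_strongProd_pathGraph_three ∅
  have hMmax := hMmax (Set.pairwise_empty _) hKind
  refine ⟨K, ⟨hK, fun N hN => ?_⟩, fun I hI => ?_⟩
  · obtain ⟨M', hM', hM'card, -⟩ := hN.exists_strongProd_pathGraph_three ∅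
    have := h M M' hMmax hM'
    omega
  · obtain ⟨L, hL, hLI, hLind⟩ := exists_isMatchingSet_disjoint_isIndepSet G I
    obtain ⟨M', -, hM'card, hM'max⟩ := hL.exists_strongProd_pathGraph_three I
    have h1 := h M' M (hM'max hI hLind) hM
    have h2 := Set.ncard_union_eq hLI
    have h3 := Set.ncard_le_card (mVerts L ∪ I)
    rw [hL.ncard_mVerts] at h2
    omega

namespace IsMaxMatching

variable [Finite V]

lemma isMaxlMatching (hK : IsMaxMatching G K) : IsMaxlMatching G K :=
  ⟨hK.1, fun K' hsub hK' =>
    (Set.eq_of_subset_of_ncard_le hsub (hK.2 K' hK') (Set.toFinite K')).symm⟩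

lemma exchange (hK : IsMaxMatching G K) (hxp : s(x, p) ∈ K) (hu : u ∉ mVerts K)
    (hux : G.Adj u x) :
    IsMaxMatching G (insert s(u, x) (K \ {s(x, p)})) ∧
      mVerts (insert s(u, x) (K \ {s(x, p)})) = insert u (mVerts K \ {p}) := by
  have hx : x ∈ mVerts K := ⟨_, hxp, Sym2.mem_mk_left x p⟩
  have hxp' : x ≠ p := (hK.1.adj hxp).ne
  have hrest : ∀ f ∈ K \ {s(x, p)}, x ∉ f ∧ p ∉ f := fun f ⟨hf, hne⟩ =>
    ⟨fun h => hne (hK.1.eq_of_mem hf hxp h (Sym2.mem_mk_left x p)),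
      fun h => hne (hK.1.eq_of_mem hf hxp h (Sym2.mem_mk_right x p))⟩
  have hK' : IsMatchingSet G (K \ {s(x, p)}) := hK.1.mono Set.sdiff_subset
  have hxK' : x ∉ mVerts (K \ {s(x, p)}) := fun ⟨f, hf, hxf⟩ => (hrest f hf).1 hxf
  have hcard : (insert s(u, x) (K \ {s(x, p)})).ncard = K.ncard := by
    rw [Set.ncard_insert_of_notMem (notMem_of_notMem_mVerts fun h =>
      hu (mVerts_mono Set.sdiff_subset h)), Set.ncard_sdiff_singleton_add_one hxp]
  refine ⟨⟨hK'.insert hux (fun h => hu (mVerts_mono Set.sdiff_subset h)) hxK',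
    fun N hN => hcard ▸ hK.2 N hN⟩, ?_⟩
  ext v
  simp only [mem_mVerts_insert, Sym2.mem_iff, Set.mem_insert_iff, Set.mem_sdiff,
    Set.mem_singleton_iff]
  constructor
  · rintro ((rfl | rfl) | ⟨f, hf, hvf⟩)
    · exact Or.inl rfl
    · exact Or.inr ⟨hx, hxp'⟩
    · exact Or.inr ⟨⟨f, hf.1, hvf⟩, fun h => (hrest f hf).2 (h ▸ hvf)⟩
  · rintro (rfl | ⟨⟨f, hf, hvf⟩, hvp⟩)
    · exact Or.inl (Or.inl rfl)
    · by_cases hfe : f = s(x, p)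
      · subst hfe
        exact Or.inl (Or.inr ((Sym2.mem_iff.1 hvf).resolve_right hvp))
      · exact Or.inr ⟨f, ⟨hf, hfe⟩, hvf⟩

/-- Otherwise `u - x = y - u'` is an augmenting path: after exchanging `xy` for `ux`, the vertices
`y` and `u'` are exposed and adjacent. -/
lemma eq_of_alternatingPath3 (hK : IsMaxMatching G K) (hxy : s(x, y) ∈ K)
    (hu : u ∉ mVerts K) (hu' : u' ∉ mVerts K) (hux : G.Adj u x) (hu'y : G.Adj u' y) :
    u = u' := by
  by_contra hne
  obtain ⟨hK', hV⟩ := hK.exchange hxy hu hux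
  have hyu : y ≠ u := fun h => hu (h ▸ ⟨_, hxy, Sym2.mem_mk_right x y⟩)
  refine hK'.isMaxlMatching.isIndepSet (x := y) (y := u') ?_ ?_ hu'y.ne.symm hu'y.symm
  · simp [hV, hyu]
  · simp [hV, Ne.symm hne, hu']

/-- After exchanging `xp` for `ux`, the path `p - z = q - w` falls under the previous lemma. -/
lemma eq_of_alternatingPath5 (hK : IsMaxMatching G K) (hxp : s(x, p) ∈ K) (hzq : s(z, q) ∈ K)
    (hne : s(x, p) ≠ s(z, q)) (hpz : G.Adj p z) (hu : u ∉ mVerts K) (hw : w ∉ mVerts K)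
    (hux : G.Adj u x) (hwq : G.Adj w q) : u = w := by
  by_contra huw
  obtain ⟨hK', hV⟩ := hK.exchange hxp hu hux
  have hp : p ∈ mVerts K := ⟨_, hxp, Sym2.mem_mk_right x p⟩
  have hpu : p ≠ u := fun h => hu (h ▸ hp)
  have := hK'.eq_of_alternatingPath3 (Set.mem_insert_of_mem _ ⟨hzq, hne.symm⟩)
    (by simp [hV, hpu]) (by simp [hV, Ne.symm huw, hw]) hpz hwq
  exact hw (this ▸ hp)

lemma exposed_neighbor_eq (hK : IsMaxMatching G K)
    (hcov : ∀ x ∈ mVerts K, ∃ u ∉ mVerts K, G.Adj u x) (hx : x ∈ mVerts K)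
    (hu : u ∉ mVerts K) (hw : w ∉ mVerts K) (hux : G.Adj u x) (hwx : G.Adj w x) : u = w := by
  obtain ⟨y, hxy⟩ := exists_mk_mem_of_mem_mVerts hx
  obtain ⟨a, ha, hay⟩ := hcov y ⟨_, hxy, Sym2.mem_mk_right x y⟩
  exact (hK.eq_of_alternatingPath3 hxy hu ha hux hay).trans
    (hK.eq_of_alternatingPath3 hxy hw ha hwx hay).symm

lemma exposed_neighbor_eq_of_adj (hK : IsMaxMatching G K)
    (hcov : ∀ x ∈ mVerts K, ∃ u ∉ mVerts K, G.Adj u x) (hx : x ∈ mVerts K)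
    (hz : z ∈ mVerts K) (hxz : G.Adj x z) (hu : u ∉ mVerts K) (hw : w ∉ mVerts K)
    (hux : G.Adj u x) (hwz : G.Adj w z) : u = w := by
  obtain ⟨x', hxx'⟩ := exists_mk_mem_of_mem_mVerts hx
  by_cases hzx' : z = x'
  · exact hK.eq_of_alternatingPath3 hxx' hu hw hux (hzx' ▸ hwz)
  obtain ⟨z', hzz'⟩ := exists_mk_mem_of_mem_mVerts hz
  obtain ⟨a, ha, hax'⟩ := hcov x' ⟨_, hxx', Sym2.mem_mk_right x x'⟩
  obtain ⟨b, hb, hbz'⟩ := hcov z' ⟨_, hzz', Sym2.mem_mk_right z z'⟩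
  have hne : s(x', x) ≠ s(z, z') := by
    intro h
    rcases Sym2.mem_iff.1 (h ▸ Sym2.mem_mk_left z z' : z ∈ s(x', x)) with h | h
    exacts [hzx' h, hxz.ne h.symm]
  calc u = a := hK.eq_of_alternatingPath3 hxx' hu ha hux hax'
    _ = b := hK.eq_of_alternatingPath5 (Sym2.eq_swap ▸ hxx') hzz' hne hxz ha hb hax' hbz'
    _ = w := (hK.eq_of_alternatingPath3 hzz' hw hb hwz hbz').symm

lemma eq_or_adj_of_reachable (hK : IsMaxMatching G K)
    (hcov : ∀ x ∈ mVerts K, ∃ u ∉ mVerts K, G.Adj u x) (hu : u ∉ mVerts K)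
    (h : G.Reachable u v) : v = u ∨ (v ∈ mVerts K ∧ G.Adj u v) := by
  rw [SimpleGraph.reachable_iff_reflTransGen] at h
  induction h with
  | refl => exact Or.inl rfl
  | @tail x y _ hxy ih =>
    have hind := hK.isMaxlMatching.isIndepSet
    rcases ih with rfl | ⟨hx, hux⟩
    · by_contra hy
      exact hind hu (fun h => hy (Or.inr ⟨h, hxy⟩)) hxy.ne hxy
    · by_cases hy : y ∈ mVerts K
      · obtain ⟨t, ht, hty⟩ := hcov y hy
        exact Or.inr ⟨hy, (hK.exposed_neighbor_eq_of_adj hcov hx hy hxy hu ht hux hty) ▸ hty⟩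
      · exact Or.inl (hK.exposed_neighbor_eq hcov hx hy hu hxy.symm hux)

lemma subsingleton_compl_mVerts (hK : IsMaxMatching G K) (hc : G.Connected)
    (hcov : ∀ x ∈ mVerts K, ∃ u ∉ mVerts K, G.Adj u x) : (mVerts K)ᶜ.Subsingleton :=
  fun u hu w hw => ((hK.eq_or_adj_of_reachable hcov hu (hc.preconnected u w)).resolve_right
    fun h => hw h.1).symm

theorem card_le_two_mul_ncard_add_one (hK : IsMaxMatching G K) (hc : G.Connected)
    (hα : ∀ I, G.IsIndepSet I → I.ncard + 2 * K.ncard ≤ Nat.card V) :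
    Nat.card V ≤ 2 * K.ncard + 1 := by
  have hsplit : (mVerts K)ᶜ.ncard + 2 * K.ncard = Nat.card V := by
    rw [← hK.1.ncard_mVerts, add_comm, Set.ncard_add_ncard_compl]
  have hcov : ∀ x ∈ mVerts K, ∃ u ∉ mVerts K, G.Adj u x := by
    intro x hx
    by_contra! hno
    have hI : G.IsIndepSet (insert x (mVerts K)ᶜ) :=
      hK.isMaxlMatching.isIndepSet.insert fun u hu _ => ⟨fun h => hno u hu h.symm, hno u hu⟩
    have := hα _ hI
    rw [Set.ncard_insert_of_notMem (not_not.2 hx)] at this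
    omega
  have := Set.ncard_le_one_iff_subsingleton.2 (hK.subsingleton_compl_mVerts hc hcov)
  omega

end IsMaxMatching

lemma ncard_le_two_of_isIndepSet_strongProd_top_pathGraph_three [Finite V] {I : Set (V × Fin 3)}
    (hI : (strongProd (⊤ : SimpleGraph V) (pathGraph 3)).IsIndepSet I) : I.ncard ≤ 2 := by
  have hlayer : ∀ p ∈ I, ∀ q ∈ I, p ≠ q → p.2 ≠ q.2 ∧ ¬ (pathGraph 3).Adj p.2 q.2 :=
    fun p hp q hq hpq => by
      by_contra! h
      refine hI hp hq hpq ⟨hpq, ?_, ?_⟩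
      · by_cases h1 : p.1 = q.1
        exacts [Or.inl h1, Or.inr h1]
      · by_cases h2 : p.2 = q.2
        exacts [Or.inl h2, Or.inr (h h2)]
  by_contra! h3
  obtain ⟨p, hp, q, hq, r, hr, hpq, hpr, hqr⟩ := (Set.two_lt_ncard (Set.toFinite _)).1 h3
  obtain ⟨hpq1, hpq2⟩ := hlayer p hp q hq hpq
  obtain ⟨hpr1, hpr2⟩ := hlayer p hp r hr hpr
  obtain ⟨hqr1, hqr2⟩ := hlayer q hq r hr hqr
  revert hpq1 hpq2 hpr1 hpr2 hqr1 hqr2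
  generalize p.2 = a
  generalize q.2 = b
  generalize r.2 = c
  simp only [pathGraph_adj]
  revert a b c
  decide

theorem equimatchable_strongProd_top_pathGraph_three [Finite V] (hodd : Odd (Nat.card V)) :
    Equimatchable (strongProd (⊤ : SimpleGraph V) (pathGraph 3)) := by
  intro M M' hM hM'
  have hcard : Nat.card (V × Fin 3) = 3 * Nat.card V := by
    rw [Nat.card_prod, Nat.card_eq_fintype_card (α := Fin 3), Fintype.card_fin, mul_comm]
  have h1 := Set.ncard_le_card (mVerts M')
  have h2 := Set.ncard_add_ncard_compl (mVerts M)
  have h3 := ncard_le_two_of_isIndepSet_strongProd_top_pathGraph_three hM.isIndepSet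
  rw [hM'.ncard_mVerts] at h1
  rw [hM.1.ncard_mVerts] at h2
  obtain ⟨m, hm⟩ := hodd
  omega

theorem stmt12_general [Fintype V] (G : SimpleGraph V)
    (hodd : Odd (Fintype.card V))
    (hc : G.Connected) :
    Equimatchable (strongProd G (pathGraph 3)) ↔ G = ⊤ := by
  rw [← Nat.card_eq_fintype_card] at hodd
  refine ⟨fun h => ?_, fun h => h ▸ equimatchable_strongProd_top_pathGraph_three hodd⟩
  obtain ⟨K, hK, hα⟩ := h.exists_isMaxMatching_of_strongProd_pathGraph_three
  by_contra hG
  obtain ⟨a, b, hab, hnadj⟩ : ∃ a b, a ≠ b ∧ ¬ G.Adj a b := by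
    by_contra! h
    exact hG (SimpleGraph.eq_top_iff_forall_ne_adj.2 h)
  have h2 := hα {a, b} (Set.pairwise_pair.2 fun _ => ⟨hnadj, fun h => hnadj h.symm⟩)
  rw [Set.ncard_pair hab] at h2
  have h1 := hK.card_le_two_mul_ncard_add_one hc hα
  omega

theorem stmt12 [Fintype V] (G : SimpleGraph V)
    (hn : 2 ≤ Fintype.card V) (hodd : Odd (Fintype.card V))
    (hc : G.Connected) :
    Equimatchable (strongProd G (pathGraph 3)) ↔ G = ⊤ :=
  stmt12_general G hodd hc
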